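/- Let L, r > 0, let N ∈ ℕ with N ≥ 2, and for each q ∈ {1, …, N}^d let Z̃_q := 2(L+r)(ℤ^d + q/N) and let f_q : Z̃_q → ℝ^d satisfy ‖f_q(x̃) − x̃‖_∞ ≤ r for every x̃ ∈ Z̃_q. Set l := (L+r)/N + r. Then the closed cubes cover all of space: ⋃_{q ∈ {1,…,N}^d} ⋃_{x̃ ∈ Z̃_q} B̄_l(f_q(x̃)) = ℝ^d. -/
import Mathlib


noncomputable section

/-- The shifted lattice `Z̃_q = 2(L+r)(ℤ^d + q/N)` in `ℝ^d` (with the sup norm). -/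
def shiftedLattice {d : ℕ} (L r : ℝ) (N : ℕ) (q : Fin d → ℕ) : Set (Fin d → ℝ) :=
  { y | ∃ z : Fin d → ℤ, y = fun i => 2 * (L + r) * ((z i : ℝ) + (q i : ℝ) / N) }

/-- **Covering.** If for each `q ∈ {1,…,N}^d` the map `f q` moves each point of the shifted
lattice `Z̃_q` by at most `r` in the sup norm, then the closed cubes of radius
`l = (L+r)/N + r` around the image points cover all of `ℝ^d`. -/
theorem closed_cubes_cover
    {d : ℕ} (L r : ℝ) (hL : 0 < L) (hr : 0 < r) (N : ℕ) (hN : 2 ≤ N)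
    (f : ∀ q : Fin d → ℕ, shiftedLattice L r N q → (Fin d → ℝ))
    (hf : ∀ q : Fin d → ℕ, (∀ i, 1 ≤ q i ∧ q i ≤ N) →
      ∀ xt : shiftedLattice L r N q, ‖f q xt - (xt : Fin d → ℝ)‖ ≤ r) :
    (⋃ q ∈ {q : Fin d → ℕ | ∀ i, 1 ≤ q i ∧ q i ≤ N},
      ⋃ xt : shiftedLattice L r N q, Metric.closedBall (f q xt) ((L + r) / N + r)) =
      Set.univ := by
  apply Set.eq_univ_of_forall
  intro x
  have hNZ : (0 : ℤ) < N := by exact_mod_cast Nat.lt_of_lt_of_le Nat.zero_lt_two hN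
  have hNR : (0 : ℝ) < N := by exact_mod_cast hNZ
  have hc : (0 : ℝ) < 2 * (L + r) := by positivity
  set c : ℝ := 2 * (L + r) with hcdef
  set m : Fin d → ℤ := fun i => round (x i * N / c) with hm
  set z : Fin d → ℤ := fun i => (m i - 1) / N with hzdef
  set q : Fin d → ℕ := fun i => ((m i - 1) % N).toNat + 1 with hqdef
  have hemod : ∀ i, 0 ≤ (m i - 1) % N := fun i => Int.emod_nonneg _ (by omega)
  have hqN : ∀ i, 1 ≤ q i ∧ q i ≤ N := by
    intro i
    refine ⟨Nat.le_add_left 1 _, ?_⟩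
    have h1 : (m i - 1) % N < N := Int.emod_lt_of_pos _ hNZ
    have h2 : ((m i - 1) % N).toNat < N := by omega
    show ((m i - 1) % N).toNat + 1 ≤ N
    omega
  -- the lattice point
  set xt : (Fin d → ℝ) := fun i => c * ((z i : ℝ) + (q i : ℝ) / N) with hxt
  have hmem : xt ∈ shiftedLattice L r N q := ⟨z, rfl⟩
  have hxt_eq : ∀ i, xt i = c * m i / N := by
    intro i
    have hdm : (N : ℤ) * z i + (m i - 1) % N = m i - 1 := Int.mul_ediv_add_emod _ _
    have hcast : (((m i - 1) % N).toNat : ℝ) = (((m i - 1) % N : ℤ) : ℝ) := by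
      exact_mod_cast Int.toNat_of_nonneg (hemod i)
    have hq' : (q i : ℝ) = ((m i - 1) % N : ℤ) + 1 := by
      simp [hqdef, hcast]
    have hz' : (z i : ℝ) = ((m i : ℝ) - 1 - (((m i - 1) % N : ℤ) : ℝ)) / N := by
      have : ((N : ℤ) : ℝ) * (z i : ℝ) + (((m i - 1) % N : ℤ) : ℝ) = (m i : ℝ) - 1 := by
        exact_mod_cast congrArg (fun t : ℤ => (t : ℝ)) hdm
      rw [eq_div_iff (ne_of_gt hNR)]
      push_cast at this ⊢
      linarith
    show c * ((z i : ℝ) + (q i : ℝ) / N) = c * m i / N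
    rw [hq', hz']
    ring
  have hdist1 : dist x xt ≤ (L + r) / N := by
    rw [dist_pi_le_iff (by positivity)]
    intro i
    rw [Real.dist_eq, hxt_eq i]
    have hround : |x i * N / c - m i| ≤ 1 / 2 := by
      simpa [hm] using abs_sub_round (x i * N / c)
    have hkey : x i - c * m i / N = (x i * N / c - m i) * (c / N) := by
      field_simp
    rw [hkey, abs_mul, abs_of_pos (by positivity : (0:ℝ) < c / N)]
    calc |x i * N / c - m i| * (c / N) ≤ (1 / 2) * (c / N) := by
          apply mul_le_mul_of_nonneg_right hround (by positivity)
      _ = (L + r) / N := by rw [hcdef]; ring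
  have hdist2 : dist xt (f q ⟨xt, hmem⟩) ≤ r := by
    rw [dist_comm, dist_eq_norm]
    exact hf q hqN ⟨xt, hmem⟩
  refine Set.mem_iUnion.2 ⟨q, Set.mem_iUnion.2 ⟨hqN, Set.mem_iUnion.2 ⟨⟨xt, hmem⟩, ?_⟩⟩⟩
  rw [Metric.mem_closedBall]
  calc dist x (f q ⟨xt, hmem⟩) ≤ dist x xt + dist xt (f q ⟨xt, hmem⟩) := dist_triangle _ _ _
    _ ≤ (L + r) / N + r := add_le_add hdist1 hdist2

end
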